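/- arXiv:1401.4522 — 4 statements merged into one kernel-verified Lean document; each statement's English description precedes it below -/
import Mathlib

section
/- A graph G with p vertices and q edges is super edge-magic if and only if there exists a bijection f from V(G) to {1,2,...,p} such that the set S = {f(x)+f(y) : xy ∈ E(G)} consists of q consecutive integers. -/
open SimpleGraph

/-- A super edge-magic labeling of `G` with magic constant `k`: a bijection from
vertices and edges onto `{1, …, p+q}` sending vertices onto `{1, …, p}`, with
`f x + f (xy) + f y = k` for every edge `xy`. -/
def IsSEMWith {V : Type*} [Fintype V] (G : SimpleGraph V) (k : ℕ) : Prop :=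
  ∃ (f : V → ℕ) (g : G.edgeSet → ℕ),
    Function.Injective (Sum.elim f g) ∧
    Set.range (Sum.elim f g) = Set.Icc 1 (Fintype.card V + G.edgeSet.ncard) ∧
    Set.range f = Set.Icc 1 (Fintype.card V) ∧
    ∀ (x y : V) (h : G.Adj x y), f x + g ⟨s(x, y), G.mem_edgeSet.mpr h⟩ + f y = k

/-- `G` is super edge-magic. -/
def IsSEM {V : Type*} [Fintype V] (G : SimpleGraph V) : Prop :=
  ∃ k : ℕ, IsSEMWith G k

/-- The graph `G ∪ t K₁`: `G` together with `t` added isolated vertices. -/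
def unionIsolated {V : Type*} (G : SimpleGraph V) (t : ℕ) : SimpleGraph (V ⊕ Fin t) :=
  G.map Function.Embedding.inl

/-- The super edge-magic deficiency `μₛ(G)`: the least `t` such that `G ∪ t K₁`
is super edge-magic, or `⊤` if there is no such `t`. -/
noncomputable def semDeficiency {V : Type*} [Fintype V] (G : SimpleGraph V) : ℕ∞ :=
  sInf ((fun t : ℕ => (t : ℕ∞)) '' {t : ℕ | IsSEM (unionIsolated G t)})

/-- `H n`: the wheel `W_n` (hub `0`, rim `1, …, n`) minus the spoke `{0, 1}`. -/
def wheelMinusSpoke (n : ℕ) : SimpleGraph (Fin (n + 1)) :=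
  SimpleGraph.fromRel (fun i j =>
    ((i : ℕ) = 0 ∧ 2 ≤ (j : ℕ)) ∨
    ((j : ℕ) = (i : ℕ) + 1 ∧ 1 ≤ (i : ℕ)) ∨
    ((i : ℕ) = n ∧ (j : ℕ) = 1))

/-- The join `P_n + K̄_m`: a path `u_1 … u_n` plus `m` vertices joined to every `u_i`. -/
def pathJoin (n m : ℕ) : SimpleGraph (Fin n ⊕ Fin m) :=
  SimpleGraph.fromRel (fun a b =>
    (∃ i j : Fin n, a = Sum.inl i ∧ b = Sum.inl j ∧ (j : ℕ) = (i : ℕ) + 1) ∨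
    (∃ (i : Fin n) (j : Fin m), a = Sum.inl i ∧ b = Sum.inr j))

/-- The join `K_{1,n} + K̄_m`: a star with center `Sum.inl 0` and leaves
`Sum.inl i`, `i ≠ 0`, plus `m` vertices joined to all star vertices. -/
def starJoin (n m : ℕ) : SimpleGraph (Fin (n + 1) ⊕ Fin m) :=
  SimpleGraph.fromRel (fun a b =>
    (∃ i : Fin (n + 1), a = Sum.inl 0 ∧ b = Sum.inl i ∧ i ≠ 0) ∨
    (∃ (i : Fin (n + 1)) (j : Fin m), a = Sum.inl i ∧ b = Sum.inr j))

/-- The join `C_n + K̄_m`: a cycle `u_1 … u_n` plus `m` vertices joined to every `u_i`. -/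
def cycleJoin (n m : ℕ) : SimpleGraph (Fin n ⊕ Fin m) :=
  SimpleGraph.fromRel (fun a b =>
    (∃ i j : Fin n, a = Sum.inl i ∧ b = Sum.inl j ∧
      ((j : ℕ) = (i : ℕ) + 1 ∨ ((i : ℕ) = n - 1 ∧ (j : ℕ) = 0))) ∨
    (∃ (i : Fin n) (j : Fin m), a = Sum.inl i ∧ b = Sum.inr j))

/-- The join `G + K̄_m`: `G` plus `m` new vertices joined to every vertex of `G`. -/
def joinIsolated {V : Type*} (G : SimpleGraph V) (m : ℕ) : SimpleGraph (V ⊕ Fin m) :=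
  SimpleGraph.fromRel (fun a b =>
    (∃ x y : V, a = Sum.inl x ∧ b = Sum.inl y ∧ G.Adj x y) ∨
    (∃ (x : V) (j : Fin m), a = Sum.inl x ∧ b = Sum.inr j))

/-!
Given a vertex labeling `f` onto `{1, …, p}` and a magic constant `k`, the label of the edge `xy` is
forced to be `k - (f x + f y)`. Hence the edge labels are exactly `{p + 1, …, p + q}`, each used once,
iff the edge sums `f x + f y` are exactly `q` consecutive integers: each is then attained by a single
edge, because `q` edges take all of `q` values.
-/

open Set Function

section Intervals

variable {ι : Type*}

theorem exists_eq_Icc_add_sub_one_iff_exists_eq_Ico {S : Set ℕ} (hS : 0 ∉ S) (q : ℕ) :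
    (∃ a, S = Icc a (a + q - 1)) ↔ ∃ a, S = Ico a (a + q) := by
  constructor
  · rintro ⟨a, rfl⟩
    have ha : a ≠ 0 := by
      rintro rfl
      exact hS (by simp)
    exact ⟨a, by ext t; simp only [mem_Icc, mem_Ico]; omega⟩
  · rintro ⟨a, rfl⟩
    -- `Icc a (a - 1)` is not empty when `a = 0`, so the empty interval needs a positive left end.
    have ha : q = 0 ∨ a ≠ 0 := by
      by_contra! h
      exact hS (by rw [← h.2]; simp only [mem_Ico]; omega)
    exact ⟨max a 1, by ext t; simp only [mem_Icc, mem_Ico]; omega⟩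

theorem range_eq_Ico_iff_range_eq_Ioc {σ g : ι → ℕ} {a b q : ℕ}
    (h : ∀ i, σ i + g i = a + b + q) :
    range σ = Ico a (a + q) ↔ range g = Ioc b (b + q) := by
  constructor
  · intro hσ
    ext t
    constructor
    · rintro ⟨i, rfl⟩
      have hi : σ i ∈ Ico a (a + q) := hσ ▸ mem_range_self i
      have := h i
      simp only [mem_Ico, mem_Ioc] at hi ⊢
      omega
    · intro ht
      simp only [mem_Ioc] at ht
      obtain ⟨i, hi⟩ : a + b + q - t ∈ range σ := by
        rw [hσ, mem_Ico]
        omega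
      exact ⟨i, by have := h i; omega⟩
  · intro hg
    ext t
    constructor
    · rintro ⟨i, rfl⟩
      have hi : g i ∈ Ioc b (b + q) := hg ▸ mem_range_self i
      have := h i
      simp only [mem_Ico, mem_Ioc] at hi ⊢
      omega
    · intro ht
      simp only [mem_Ico] at ht
      obtain ⟨i, hi⟩ : a + b + q - t ∈ range g := by
        rw [hg, mem_Ioc]
        omega
      exact ⟨i, by have := h i; omega⟩

theorem exists_range_eq_Ico_of_add_eq {σ g : ι → ℕ} {k b q : ℕ} (h : ∀ i, σ i + g i = k)
    (hg : range g = Ioc b (b + q)) : ∃ a, range σ = Ico a (a + q) := by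
  rcases Nat.eq_zero_or_pos q with rfl | hq
  · have : IsEmpty ι := (range_eq_empty_iff (f := g)).1 (by rw [hg]; simp)
    exact ⟨0, by rw [add_zero, Ico_self]; exact range_eq_empty σ⟩
  · obtain ⟨i, hi⟩ : b + q ∈ range g := by
      rw [hg, mem_Ioc]
      omega
    have hk : k = (k - b - q) + b + q := by
      have := h i
      omega
    exact ⟨k - b - q, (range_eq_Ico_iff_range_eq_Ioc (hk ▸ h)).2 hg⟩

theorem injective_of_ncard_range_eq {α : Type*} [Finite ι] {σ : ι → α}
    (h : (range σ).ncard = Nat.card ι) : Injective σ :=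
  injOn_univ.1 <| injOn_of_ncard_image_eq (by rwa [image_univ, ncard_univ])

theorem sumElim_injective_and_range_eq_Icc_iff {α β : Type*} {f : α → ℕ} {g : β → ℕ}
    {p q : ℕ} (hf : range f = Icc 1 p) :
    Injective (Sum.elim f g) ∧ range (Sum.elim f g) = Icc 1 (p + q) ↔
      Injective f ∧ Injective g ∧ range g = Ioc p (p + q) := by
  rw [Sum.elim_injective, Set.Sum.elim_range, hf]
  constructor
  · rintro ⟨⟨hfi, hgi, hfg⟩, hU⟩
    have hdisj : ∀ b, g b ∉ Icc 1 p := fun b hb => by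
      obtain ⟨a, ha⟩ : g b ∈ range f := hf ▸ hb
      exact hfg a b ha
    refine ⟨hfi, hgi, ?_⟩
    ext t
    constructor
    · rintro ⟨b, rfl⟩
      have hb : g b ∈ Icc 1 (p + q) := hU ▸ Or.inr (mem_range_self b)
      have := hdisj b
      simp only [mem_Icc, mem_Ioc] at hb this ⊢
      omega
    · intro ht
      have ht' : t ∈ Icc 1 p ∪ range g := hU ▸ (by simp only [mem_Icc, mem_Ioc] at ht ⊢; omega)
      exact ht'.resolve_left (by simp only [mem_Icc, mem_Ioc] at ht ⊢; omega)
  · rintro ⟨hfi, hgi, hg⟩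
    refine ⟨⟨hfi, hgi, fun a b hab => ?_⟩, ?_⟩
    · have ha : f a ∈ Icc 1 p := hf ▸ mem_range_self a
      have hb : g b ∈ Ioc p (p + q) := hg ▸ mem_range_self b
      simp only [mem_Icc, mem_Ioc] at ha hb
      omega
    · rw [hg]
      ext t
      simp only [mem_union, mem_Icc, mem_Ioc]
      omega

end Intervals

section EdgeSum

variable {V M : Type*} (G : SimpleGraph V)

def edgeSum [AddCommMagma M] (f : V → M) : Sym2 V → M :=
  Sym2.lift ⟨fun x y => f x + f y, fun _ _ => add_comm _ _⟩

@[simp]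
theorem edgeSum_mk [AddCommMagma M] (f : V → M) (x y : V) : edgeSum f s(x, y) = f x + f y :=
  rfl

theorem edgeSum_pos {f : V → ℕ} (hf : ∀ x, 0 < f x) (e : Sym2 V) : 0 < edgeSum f e := by
  induction e using Sym2.ind with
  | _ x y => exact Nat.add_pos_left (hf x) _

theorem setOf_adj_add_eq_range_edgeSum [AddCommMagma M] (f : V → M) :
    {t | ∃ x y, G.Adj x y ∧ f x + f y = t} = range fun e : G.edgeSet => edgeSum f e := by
  ext t
  constructor
  · rintro ⟨x, y, h, rfl⟩
    exact ⟨⟨s(x, y), h⟩, rfl⟩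
  · rintro ⟨⟨e, he⟩, rfl⟩
    induction e using Sym2.ind with
    | _ x y => exact ⟨x, y, he, rfl⟩

theorem forall_adj_add_add_eq_iff [AddCommSemigroup M] (f : V → M) (g : G.edgeSet → M) (k : M) :
    (∀ (x y : V) (h : G.Adj x y), f x + g ⟨s(x, y), G.mem_edgeSet.mpr h⟩ + f y = k) ↔
      ∀ e : G.edgeSet, edgeSum f e + g e = k := by
  constructor
  · rintro h ⟨e, he⟩
    induction e using Sym2.ind with
    | _ x y => rw [edgeSum_mk, add_right_comm]; exact h x y he
  · intro h x y hxy
    rw [add_right_comm]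
    exact h ⟨s(x, y), hxy⟩

end EdgeSum

theorem isSEM_iff_exists_range_edgeSum_eq_Ico {V : Type*} [Fintype V] (G : SimpleGraph V) :
    IsSEM G ↔ ∃ f : V → ℕ, Injective f ∧ range f = Icc 1 (Fintype.card V) ∧
      ∃ a, range (fun e : G.edgeSet => edgeSum f e) = Ico a (a + G.edgeSet.ncard) := by
  constructor
  · rintro ⟨k, f, g, hinj, hrange, hf, hmagic⟩
    obtain ⟨hfi, -, hg⟩ := (sumElim_injective_and_range_eq_Icc_iff hf).1 ⟨hinj, hrange⟩
    exact ⟨f, hfi, hf,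
      exists_range_eq_Ico_of_add_eq ((forall_adj_add_add_eq_iff G f g k).1 hmagic) hg⟩
  · rintro ⟨f, hfi, hf, a, hσ⟩
    set p := Fintype.card V
    set q := G.edgeSet.ncard
    set σ := fun e : G.edgeSet => edgeSum f e
    let g : G.edgeSet → ℕ := fun e => a + p + q - σ e
    have hσg : ∀ e, σ e + g e = a + p + q := fun e => by
      have he : σ e ∈ Ico a (a + q) := hσ ▸ mem_range_self e
      rw [mem_Ico] at he
      exact Nat.add_sub_cancel' (by omega)
    have hσi : Injective σ :=
      injective_of_ncard_range_eq (by rw [hσ, ncard_Ico_nat, Nat.card_coe_set_eq]; omega)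
    have hgi : Injective g := fun e e' h => hσi (by have := hσg e; have := hσg e'; omega)
    obtain ⟨hinj, hrange⟩ := (sumElim_injective_and_range_eq_Icc_iff hf).2
      ⟨hfi, hgi, (range_eq_Ico_iff_range_eq_Ioc hσg).1 hσ⟩
    exact ⟨a + p + q, f, g, hinj, hrange, hf, (forall_adj_add_add_eq_iff G f g _).2 hσg⟩

/-- `G` with `p` vertices and `q` edges is super edge-magic iff there is a
bijection `f : V(G) → {1,…,p}` whose edge-sum set `{f x + f y : xy ∈ E}` consists of `q`
consecutive integers. -/
theorem stmt0 {V : Type*} [Fintype V] (G : SimpleGraph V) :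
    IsSEM G ↔ ∃ f : V → ℕ, Function.Injective f ∧
      Set.range f = Set.Icc 1 (Fintype.card V) ∧
      ∃ a : ℕ, {t : ℕ | ∃ x y, G.Adj x y ∧ f x + f y = t} =
        Set.Icc a (a + G.edgeSet.ncard - 1) := by
  rw [isSEM_iff_exists_range_edgeSum_eq_Ico]
  refine exists_congr fun f => and_congr_right fun _ => and_congr_right fun hf => ?_
  have hpos : ∀ x, 0 < f x := fun x => (hf ▸ mem_range_self x : f x ∈ Icc 1 _).1
  rw [setOf_adj_add_eq_range_edgeSum, exists_eq_Icc_add_sub_one_iff_exists_eq_Ico]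
  rintro ⟨e, he⟩
  exact (edgeSum_pos hpos e).ne' he
end

section
/- For n ≥ 7, the graph H_n = W_n − spoke (the wheel W_n with one spoke removed, which has p = n+1 vertices and q = 2p−3 edges) is not super edge-magic. -/
open SimpleGraph

section Aux

open SimpleGraph

lemma wms_adj {n : ℕ} {x y : Fin (n+1)} :
    (wheelMinusSpoke n).Adj x y ↔ (x : ℕ) ≠ (y : ℕ) ∧
      ((((x:ℕ) = 0 ∧ 2 ≤ (y:ℕ)) ∨ ((y:ℕ) = (x:ℕ)+1 ∧ 1 ≤ (x:ℕ)) ∨ ((x:ℕ) = n ∧ (y:ℕ) = 1)) ∨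
       (((y:ℕ) = 0 ∧ 2 ≤ (x:ℕ)) ∨ ((x:ℕ) = (y:ℕ)+1 ∧ 1 ≤ (y:ℕ)) ∨ ((y:ℕ) = n ∧ (x:ℕ) = 1))) := by
  rw [wheelMinusSpoke, SimpleGraph.fromRel_adj, ne_eq, Fin.ext_iff]

lemma hub_star {n : ℕ} (hn : 7 ≤ n) {x y z w : Fin (n+1)}
    (hxy : (wheelMinusSpoke n).Adj x y) (hxz : (wheelMinusSpoke n).Adj x z)
    (hxw : (wheelMinusSpoke n).Adj x w)
    (hyz : y ≠ z) (hyw : y ≠ w) (hzw : z ≠ w) :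
    x = 0 ∨ y = 0 ∨ z = 0 ∨ w = 0 := by
  rw [wms_adj] at hxy hxz hxw
  rw [Ne, Fin.ext_iff] at hyz hyw hzw
  simp only [Fin.ext_iff, Fin.val_zero]
  have hx := x.isLt; have hy := y.isLt; have hz := z.isLt; have hw := w.isLt
  omega

lemma hub_triangle {n : ℕ} (hn : 7 ≤ n) {x y z : Fin (n+1)}
    (hxy : (wheelMinusSpoke n).Adj x y) (hyz : (wheelMinusSpoke n).Adj y z)
    (hxz : (wheelMinusSpoke n).Adj x z) :
    x = 0 ∨ y = 0 ∨ z = 0 := by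
  rw [wms_adj] at hxy hyz hxz
  simp only [Fin.ext_iff, Fin.val_zero]
  have hx := x.isLt; have hy := y.isLt; have hz := z.isLt
  omega

lemma config_zero {n : ℕ} (hn : 7 ≤ n) {a b c d : Fin (n+1)}
    (hab : (wheelMinusSpoke n).Adj a b) (hac : (wheelMinusSpoke n).Adj a c)
    (h : (wheelMinusSpoke n).Adj a d ∨ (wheelMinusSpoke n).Adj b c)
    (hbc : b ≠ c) (hbd : b ≠ d) (hcd : c ≠ d) :
    a = 0 ∨ b = 0 ∨ c = 0 ∨ d = 0 := by
  rcases h with had | hbc'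
  · exact hub_star hn hab hac had hbc hbd hcd
  · rcases hub_triangle hn hab hbc' hac with h | h | h
    exacts [Or.inl h, Or.inr (Or.inl h), Or.inr (Or.inr (Or.inl h))]

noncomputable instance wmsFintypeEdgeSet (n : ℕ) : Fintype (wheelMinusSpoke n).edgeSet :=
  Fintype.ofFinite _

def wmsCode (n : ℕ) (k : ℕ) (hk : k < 2*n - 1) (hn : 7 ≤ n) : Sym2 (Fin (n+1)) :=
  if h1 : k < n - 1 then s((⟨0, by omega⟩ : Fin (n+1)), ⟨k+2, by omega⟩)
  else if h2 : k < 2*n - 2 then s((⟨k+2-n, by omega⟩ : Fin (n+1)), ⟨k+3-n, by omega⟩)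
  else s((⟨n, by omega⟩ : Fin (n+1)), ⟨1, by omega⟩)

lemma wms_card_edges {n : ℕ} (hn : 7 ≤ n) :
    (wheelMinusSpoke n).edgeFinset.card = 2*n - 1 := by
  apply Finset.card_eq_of_bijective (fun k hk => wmsCode n k hk hn)
  · -- surjective
    intro a ha
    rw [SimpleGraph.mem_edgeFinset] at ha
    revert ha
    induction a using Sym2.ind with | _ x y =>
    intro ha
    rw [SimpleGraph.mem_edgeSet, wms_adj] at ha
    obtain ⟨hne, hcase⟩ := ha
    have hx := x.isLt; have hy := y.isLt
    rcases hcase with (⟨h1,h2⟩|⟨h1,h2⟩|⟨h1,h2⟩)|(⟨h1,h2⟩|⟨h1,h2⟩|⟨h1,h2⟩)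
    · refine ⟨(y:ℕ)-2, by omega, ?_⟩
      rw [wmsCode, dif_pos (by omega), Sym2.eq_iff]
      exact Or.inl ⟨Fin.ext (by simp only [Fin.val_mk]; omega),
        Fin.ext (by simp only [Fin.val_mk]; omega)⟩
    · refine ⟨(x:ℕ)+n-2, by omega, ?_⟩
      rw [wmsCode, dif_neg (by omega), dif_pos (by omega), Sym2.eq_iff]
      exact Or.inl ⟨Fin.ext (by simp only [Fin.val_mk]; omega),
        Fin.ext (by simp only [Fin.val_mk]; omega)⟩
    · refine ⟨2*n-2, by omega, ?_⟩
      rw [wmsCode, dif_neg (by omega), dif_neg (by omega), Sym2.eq_iff]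
      exact Or.inl ⟨Fin.ext (by simp only [Fin.val_mk]; omega),
        Fin.ext (by simp only [Fin.val_mk]; omega)⟩
    · refine ⟨(x:ℕ)-2, by omega, ?_⟩
      rw [wmsCode, dif_pos (by omega), Sym2.eq_iff]
      exact Or.inr ⟨Fin.ext (by simp only [Fin.val_mk]; omega),
        Fin.ext (by simp only [Fin.val_mk]; omega)⟩
    · refine ⟨(y:ℕ)+n-2, by omega, ?_⟩
      rw [wmsCode, dif_neg (by omega), dif_pos (by omega), Sym2.eq_iff]
      exact Or.inr ⟨Fin.ext (by simp only [Fin.val_mk]; omega),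
        Fin.ext (by simp only [Fin.val_mk]; omega)⟩
    · refine ⟨2*n-2, by omega, ?_⟩
      rw [wmsCode, dif_neg (by omega), dif_neg (by omega), Sym2.eq_iff]
      exact Or.inr ⟨Fin.ext (by simp only [Fin.val_mk]; omega),
        Fin.ext (by simp only [Fin.val_mk]; omega)⟩
  · -- membership
    intro i h
    rw [SimpleGraph.mem_edgeFinset, wmsCode]
    split_ifs with h1 h2
    · rw [SimpleGraph.mem_edgeSet, wms_adj]
      exact ⟨by simp only [Fin.val_mk]; omega,
        Or.inl (Or.inl ⟨rfl, by simp only [Fin.val_mk]; omega⟩)⟩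
    · rw [SimpleGraph.mem_edgeSet, wms_adj]
      exact ⟨by simp only [Fin.val_mk]; omega,
        Or.inl (Or.inr (Or.inl ⟨by simp only [Fin.val_mk]; omega,
          by simp only [Fin.val_mk]; omega⟩))⟩
    · rw [SimpleGraph.mem_edgeSet, wms_adj]
      exact ⟨by simp only [Fin.val_mk]; omega,
        Or.inl (Or.inr (Or.inr ⟨rfl, rfl⟩))⟩
  · -- injective
    intro i j hi hj hij
    rw [wmsCode, wmsCode] at hij
    split_ifs at hij <;>
      rw [Sym2.eq_iff] at hij <;>
      simp only [Fin.ext_iff, Fin.val_mk] at hij <;>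
      omega

/-- Sum of the two endpoint labels. -/
def sumf {n : ℕ} (f : Fin (n+1) → ℕ) : Sym2 (Fin (n+1)) → ℕ :=
  Sym2.lift ⟨fun x y => f x + f y, fun x y => Nat.add_comm (f x) (f y)⟩

@[simp] lemma sumf_mk {n : ℕ} (f : Fin (n+1) → ℕ) (x y : Fin (n+1)) :
    sumf f s(x, y) = f x + f y := rfl

end Aux

theorem stmt4' (n : ℕ) (hn : 7 ≤ n) : ¬ IsSEM (wheelMinusSpoke n) := by
  intro hsem
  set G := wheelMinusSpoke n with hG
  obtain ⟨k, f, g, hinj, hrange, hrangef, hmagic⟩ := hsem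
  have hf_inj : Function.Injective f := fun a b h =>
    Sum.inl_injective (hinj (show Sum.elim f g (Sum.inl a) = Sum.elim f g (Sum.inl b) from h))
  have hg_inj : Function.Injective g := fun a b h =>
    Sum.inr_injective (hinj (show Sum.elim f g (Sum.inr a) = Sum.elim f g (Sum.inr b) from h))
  have hfb : ∀ v, 1 ≤ f v ∧ f v ≤ n + 1 := by
    intro v
    have hv : f v ∈ Set.range f := Set.mem_range_self v
    rw [hrangef] at hv
    simpa [Fintype.card_fin] using hv
  have hvert : ∀ l, 1 ≤ l → l ≤ n + 1 → ∃ v, f v = l := by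
    intro l h1 h2
    have hl : l ∈ Set.range f := by
      rw [hrangef, Fintype.card_fin]; exact Set.mem_Icc.mpr ⟨h1, h2⟩
    exact hl
  have hkey : ∀ (e : Sym2 (Fin (n+1))) (he : e ∈ G.edgeSet), sumf f e + g ⟨e, he⟩ = k := by
    intro e
    induction e using Sym2.ind with | _ x y =>
    intro he
    have hadj : G.Adj x y := (SimpleGraph.mem_edgeSet G).mp he
    have hm := hmagic x y hadj
    have hrw : (⟨s(x,y), he⟩ : G.edgeSet) = ⟨s(x,y), G.mem_edgeSet.mpr hadj⟩ := rfl
    rw [sumf_mk, hrw]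
    omega
  have hmaps : ∀ e ∈ G.edgeFinset, sumf f e ∈ Finset.Icc 3 (2*n+1) := by
    intro e
    induction e using Sym2.ind with | _ x y =>
    intro he
    have hadj : G.Adj x y := SimpleGraph.mem_edgeFinset.mp he
    have hne : f x ≠ f y := fun h => hadj.ne (hf_inj h)
    have hbx := hfb x; have hby := hfb y
    rw [sumf_mk, Finset.mem_Icc]
    omega
  have hinj2 : ∀ e₁ e₂, e₁ ∈ G.edgeFinset → e₂ ∈ G.edgeFinset → sumf f e₁ = sumf f e₂ →
      e₁ = e₂ := by
    intro e₁ e₂ h₁ h₂ hs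
    have he₁ := SimpleGraph.mem_edgeFinset.mp h₁
    have he₂ := SimpleGraph.mem_edgeFinset.mp h₂
    have k1 := hkey e₁ he₁
    have k2 := hkey e₂ he₂
    have hgeq : g ⟨e₁, he₁⟩ = g ⟨e₂, he₂⟩ := by omega
    simpa using hg_inj hgeq
  have hcard : G.edgeFinset.card = 2*n - 1 := wms_card_edges hn
  have hcardle : (Finset.Icc 3 (2*n+1)).card ≤ G.edgeFinset.card := by
    rw [hcard, Nat.card_Icc]; omega
  have hsum : ∀ m, 3 ≤ m → m ≤ 2*n+1 → ∃ x y, G.Adj x y ∧ f x + f y = m := by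
    intro m h3 hm
    obtain ⟨e, he, hme⟩ := Finset.surj_on_of_inj_on_of_card_le (fun e _ => sumf f e)
      hmaps hinj2 hcardle m (Finset.mem_Icc.mpr ⟨h3, hm⟩)
    revert he hme
    induction e using Sym2.ind with | _ x y =>
    intro he hme
    exact ⟨x, y, SimpleGraph.mem_edgeFinset.mp he, by simpa using hme.symm⟩
  -- special vertices
  obtain ⟨v1, hv1⟩ := hvert 1 (by omega) (by omega)
  obtain ⟨v2, hv2⟩ := hvert 2 (by omega) (by omega)
  obtain ⟨v3, hv3⟩ := hvert 3 (by omega) (by omega)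
  obtain ⟨v4, hv4⟩ := hvert 4 (by omega) (by omega)
  obtain ⟨w1, hw1⟩ := hvert (n+1) (by omega) (by omega)
  obtain ⟨w2, hw2⟩ := hvert n (by omega) (by omega)
  obtain ⟨w3, hw3⟩ := hvert (n-1) (by omega) (by omega)
  obtain ⟨w4, hw4⟩ := hvert (n-2) (by omega) (by omega)
  have hnev : ∀ {x y : Fin (n+1)} {a b : ℕ}, f x = a → f y = b → a ≠ b → x ≠ y := by
    intro x y a b hx hy hab h
    subst hx; subst hy
    exact hab (congrArg f h)
  -- forced edges
  have e3 : G.Adj v1 v2 := by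
    obtain ⟨x, y, hxy, hs⟩ := hsum 3 (by omega) (by omega)
    have hbx := hfb x; have hby := hfb y
    have hne : f x ≠ f y := fun h => hxy.ne (hf_inj h)
    have hcase : (f x = 1 ∧ f y = 2) ∨ (f x = 2 ∧ f y = 1) := by omega
    rcases hcase with ⟨h1, h2⟩ | ⟨h1, h2⟩
    · have hx : x = v1 := hf_inj (h1.trans hv1.symm)
      have hy : y = v2 := hf_inj (h2.trans hv2.symm)
      subst hx; subst hy; exact hxy
    · have hx : x = v2 := hf_inj (h1.trans hv2.symm)
      have hy : y = v1 := hf_inj (h2.trans hv1.symm)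
      subst hx; subst hy; exact hxy.symm
  have e4 : G.Adj v1 v3 := by
    obtain ⟨x, y, hxy, hs⟩ := hsum 4 (by omega) (by omega)
    have hbx := hfb x; have hby := hfb y
    have hne : f x ≠ f y := fun h => hxy.ne (hf_inj h)
    have hcase : (f x = 1 ∧ f y = 3) ∨ (f x = 3 ∧ f y = 1) := by omega
    rcases hcase with ⟨h1, h2⟩ | ⟨h1, h2⟩
    · have hx : x = v1 := hf_inj (h1.trans hv1.symm)
      have hy : y = v3 := hf_inj (h2.trans hv3.symm)
      subst hx; subst hy; exact hxy
    · have hx : x = v3 := hf_inj (h1.trans hv3.symm)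
      have hy : y = v1 := hf_inj (h2.trans hv1.symm)
      subst hx; subst hy; exact hxy.symm
  have e5 : G.Adj v1 v4 ∨ G.Adj v2 v3 := by
    obtain ⟨x, y, hxy, hs⟩ := hsum 5 (by omega) (by omega)
    have hbx := hfb x; have hby := hfb y
    have hne : f x ≠ f y := fun h => hxy.ne (hf_inj h)
    have hcase : (f x = 1 ∧ f y = 4) ∨ (f x = 4 ∧ f y = 1) ∨
        (f x = 2 ∧ f y = 3) ∨ (f x = 3 ∧ f y = 2) := by omega
    rcases hcase with ⟨h1, h2⟩ | ⟨h1, h2⟩ | ⟨h1, h2⟩ | ⟨h1, h2⟩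
    · have hx : x = v1 := hf_inj (h1.trans hv1.symm)
      have hy : y = v4 := hf_inj (h2.trans hv4.symm)
      subst hx; subst hy; exact Or.inl hxy
    · have hx : x = v4 := hf_inj (h1.trans hv4.symm)
      have hy : y = v1 := hf_inj (h2.trans hv1.symm)
      subst hx; subst hy; exact Or.inl hxy.symm
    · have hx : x = v2 := hf_inj (h1.trans hv2.symm)
      have hy : y = v3 := hf_inj (h2.trans hv3.symm)
      subst hx; subst hy; exact Or.inr hxy
    · have hx : x = v3 := hf_inj (h1.trans hv3.symm)
      have hy : y = v2 := hf_inj (h2.trans hv2.symm)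
      subst hx; subst hy; exact Or.inr hxy.symm
  have f3 : G.Adj w1 w2 := by
    obtain ⟨x, y, hxy, hs⟩ := hsum (2*n+1) (by omega) (by omega)
    have hbx := hfb x; have hby := hfb y
    have hne : f x ≠ f y := fun h => hxy.ne (hf_inj h)
    have hcase : (f x = n+1 ∧ f y = n) ∨ (f x = n ∧ f y = n+1) := by omega
    rcases hcase with ⟨h1, h2⟩ | ⟨h1, h2⟩
    · have hx : x = w1 := hf_inj (h1.trans hw1.symm)
      have hy : y = w2 := hf_inj (h2.trans hw2.symm)
      subst hx; subst hy; exact hxy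
    · have hx : x = w2 := hf_inj (h1.trans hw2.symm)
      have hy : y = w1 := hf_inj (h2.trans hw1.symm)
      subst hx; subst hy; exact hxy.symm
  have f4 : G.Adj w1 w3 := by
    obtain ⟨x, y, hxy, hs⟩ := hsum (2*n) (by omega) (by omega)
    have hbx := hfb x; have hby := hfb y
    have hne : f x ≠ f y := fun h => hxy.ne (hf_inj h)
    have hcase : (f x = n+1 ∧ f y = n-1) ∨ (f x = n-1 ∧ f y = n+1) := by omega
    rcases hcase with ⟨h1, h2⟩ | ⟨h1, h2⟩
    · have hx : x = w1 := hf_inj (h1.trans hw1.symm)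
      have hy : y = w3 := hf_inj (h2.trans hw3.symm)
      subst hx; subst hy; exact hxy
    · have hx : x = w3 := hf_inj (h1.trans hw3.symm)
      have hy : y = w1 := hf_inj (h2.trans hw1.symm)
      subst hx; subst hy; exact hxy.symm
  have f5 : G.Adj w1 w4 ∨ G.Adj w2 w3 := by
    obtain ⟨x, y, hxy, hs⟩ := hsum (2*n-1) (by omega) (by omega)
    have hbx := hfb x; have hby := hfb y
    have hne : f x ≠ f y := fun h => hxy.ne (hf_inj h)
    have hcase : (f x = n+1 ∧ f y = n-2) ∨ (f x = n-2 ∧ f y = n+1) ∨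
        (f x = n ∧ f y = n-1) ∨ (f x = n-1 ∧ f y = n) := by omega
    rcases hcase with ⟨h1, h2⟩ | ⟨h1, h2⟩ | ⟨h1, h2⟩ | ⟨h1, h2⟩
    · have hx : x = w1 := hf_inj (h1.trans hw1.symm)
      have hy : y = w4 := hf_inj (h2.trans hw4.symm)
      subst hx; subst hy; exact Or.inl hxy
    · have hx : x = w4 := hf_inj (h1.trans hw4.symm)
      have hy : y = w1 := hf_inj (h2.trans hw1.symm)
      subst hx; subst hy; exact Or.inl hxy.symm
    · have hx : x = w2 := hf_inj (h1.trans hw2.symm)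
      have hy : y = w3 := hf_inj (h2.trans hw3.symm)
      subst hx; subst hy; exact Or.inr hxy
    · have hx : x = w3 := hf_inj (h1.trans hw3.symm)
      have hy : y = w2 := hf_inj (h2.trans hw2.symm)
      subst hx; subst hy; exact Or.inr hxy.symm
  -- each configuration contains the hub 0
  have hvzero : ∃ a : Fin (n+1), a = 0 ∧ f a ≤ 4 := by
    rcases config_zero hn e3 e4 e5 (hnev hv2 hv3 (by omega)) (hnev hv2 hv4 (by omega))
        (hnev hv3 hv4 (by omega)) with h | h | h | h
    exacts [⟨v1, h, by omega⟩, ⟨v2, h, by omega⟩, ⟨v3, h, by omega⟩, ⟨v4, h, by omega⟩]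
  have hwzero : ∃ a : Fin (n+1), a = 0 ∧ n - 2 ≤ f a := by
    rcases config_zero hn f3 f4 f5 (hnev hw2 hw3 (by omega)) (hnev hw2 hw4 (by omega))
        (hnev hw3 hw4 (by omega)) with h | h | h | h
    exacts [⟨w1, h, by omega⟩, ⟨w2, h, by omega⟩, ⟨w3, h, by omega⟩, ⟨w4, h, by omega⟩]
  obtain ⟨a, ha0, ha⟩ := hvzero
  obtain ⟨b, hb0, hb⟩ := hwzero
  have hab : f a = f b := by rw [ha0, hb0]
  omega

/-- in particular, for `n ≥ 7` the graph `H_n = W_n` minus a spoke is not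
super edge-magic. -/
theorem stmt4 (n : ℕ) (hn : 7 ≤ n) : ¬ IsSEM (wheelMinusSpoke n) := by
  exact stmt4' n hn
end

section
/- For every integer n ≥ 8 with n ≡ 0 (mod 4), the super edge-magic deficiency of the wheel minus a spoke satisfies μ_s(W_n − e) ≤ n/2. -/
open SimpleGraph

/-! Write `n = 4s`. A graph is super edge-magic as soon as a bijective vertex labelling onto
`{1, …, p}` has pairwise distinct endpoint sums forming an interval `[a, a + q - 1]`: labelling
each edge `xy` by `p + q + a - (f x + f y)` completes it, with magic constant `p + q + a`.
For `(W_{4s} − e) ∪ 2s K₁`, label the hub `6s + 1`, the endpoint `x₁` of the removed spoke `5s`,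
and `x₂, …, x_{4s}` by `1, …, 4s - 1` in the zig-zag order of `wheelLabel`; the isolated vertices
take the remaining labels of `[4s, 6s]`. The rim edges `xᵢxᵢ₊₁` then have sums `2s + 2, …, 6s`,
the rim edge `x_{4s}x₁` has sum `6s + 1`, and the spokes have sums `6s + 2, …, 10s`. -/

def endpointSum {V : Type*} (f : V → ℕ) : Sym2 V → ℕ :=
  Sym2.lift ⟨fun x y => f x + f y, fun _ _ => Nat.add_comm _ _⟩

@[simp]
lemma endpointSum_mk {V : Type*} (f : V → ℕ) (x y : V) : endpointSum f s(x, y) = f x + f y :=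
  rfl

lemma endpointSum_map {V W : Type*} (f : W → ℕ) (φ : V → W) (e : Sym2 V) :
    endpointSum f (Sym2.map φ e) = endpointSum (f ∘ φ) e := by
  induction e using Sym2.ind
  rfl

lemma range_eq_Icc_of_injective {α : Type*} [Fintype α] {f : α → ℕ} (hf : Function.Injective f)
    (hmem : ∀ x, f x ∈ Set.Icc 1 (Fintype.card α)) : Set.range f = Set.Icc 1 (Fintype.card α) := by
  refine Set.eq_of_subset_of_ncard_le (Set.range_subset_iff.mpr hmem) ?_ (Set.finite_Icc _ _)
  rw [Set.ncard_range_of_injective hf, Set.ncard_Icc_nat, Nat.card_eq_fintype_card]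
  omega

theorem isSEMWith_of_endpointSum {V : Type*} [Fintype V] {G : SimpleGraph V} {f : V → ℕ}
    (hf : Function.Injective f) (hrange : Set.range f = Set.Icc 1 (Fintype.card V)) {a b : ℕ}
    (hinj : Set.InjOn (endpointSum f) G.edgeSet)
    (himage : endpointSum f '' G.edgeSet = Set.Icc a b) :
    IsSEMWith G (Fintype.card V + G.edgeSet.ncard + a) := by
  have hq : G.edgeSet.ncard = b + 1 - a := by rw [← hinj.ncard_image, himage, Set.ncard_Icc_nat]
  set p := Fintype.card V
  set q := G.edgeSet.ncard
  have hsum : ∀ e ∈ G.edgeSet, a ≤ endpointSum f e ∧ endpointSum f e ≤ b := fun e he =>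
    himage.subset (Set.mem_image_of_mem _ he)
  have hf_mem : ∀ x, 1 ≤ f x ∧ f x ≤ p := fun x => hrange.subset (Set.mem_range_self x)
  set g : G.edgeSet → ℕ := fun e => p + q + a - endpointSum f e
  have hg_range : Set.range g = Set.Icc (p + 1) (p + q) := by
    ext t
    constructor
    · rintro ⟨e, rfl⟩
      have := hsum e e.2
      simp only [Set.mem_Icc, g]
      omega
    · rintro ⟨ht₁, ht₂⟩
      obtain ⟨e, he, hes⟩ : p + q + a - t ∈ endpointSum f '' G.edgeSet := by
        rw [himage]; constructor <;> omega
      exact ⟨⟨e, he⟩, by simp only [g, hes]; omega⟩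
  refine ⟨f, g, hf.sumElim ?_ ?_, ?_, hrange, ?_⟩
  · intro e e' h
    have := hsum e e.2
    have := hsum e' e'.2
    exact Subtype.ext (hinj e.2 e'.2 (by simp only [g] at h; omega))
  · intro x e
    have := hf_mem x
    have : g e ∈ Set.Icc (p + 1) (p + q) := hg_range ▸ Set.mem_range_self e
    rw [Set.mem_Icc] at this
    omega
  · rw [Set.Sum.elim_range, hrange, hg_range]
    ext t
    simp only [Set.mem_union, Set.mem_Icc]
    omega
  · intro x y hxy
    have := hsum _ (G.mem_edgeSet.mpr hxy)
    simp only [g, endpointSum_mk] at this ⊢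
    omega

lemma edgeSet_unionIsolated {V : Type*} (G : SimpleGraph V) (t : ℕ) :
    (unionIsolated G t).edgeSet = Sym2.map Sum.inl '' G.edgeSet :=
  G.edgeSet_map Function.Embedding.inl

theorem isSEM_unionIsolated_of_endpointSum {V : Type*} [Fintype V] {G : SimpleGraph V} {t : ℕ}
    {f : V ⊕ Fin t → ℕ} (hf : Function.Injective f)
    (hrange : Set.range f = Set.Icc 1 (Fintype.card (V ⊕ Fin t))) {a b : ℕ}
    (hinj : Set.InjOn (endpointSum (f ∘ Sum.inl)) G.edgeSet)
    (himage : endpointSum (f ∘ Sum.inl) '' G.edgeSet = Set.Icc a b) :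
    IsSEM (unionIsolated G t) := by
  have hcomp : endpointSum f ∘ Sym2.map Sum.inl = endpointSum (f ∘ Sum.inl) :=
    funext (endpointSum_map f Sum.inl)
  rw [← hcomp] at hinj himage
  refine ⟨_, isSEMWith_of_endpointSum hf hrange (a := a) (b := b) ?_ ?_⟩ <;>
    rw [edgeSet_unionIsolated]
  · exact hinj.image_of_comp
  · rwa [← Set.image_comp]

lemma semDeficiency_le {V : Type*} [Fintype V] {G : SimpleGraph V} {t : ℕ}
    (h : IsSEM (unionIsolated G t)) : semDeficiency G ≤ t :=
  sInf_le ⟨t, h, rfl⟩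

def wheelArc (n i j : ℕ) : Prop :=
  (i = 0 ∧ 2 ≤ j) ∨ (j = i + 1 ∧ 1 ≤ i) ∨ (i = n ∧ j = 1)

lemma wheelMinusSpoke_eq_fromRel (n : ℕ) :
    wheelMinusSpoke n = fromRel (fun i j : Fin (n + 1) => wheelArc n i j) :=
  rfl

lemma exists_wheelArc_of_mem_edgeSet {n : ℕ} {e : Sym2 (Fin (n + 1))}
    (he : e ∈ (wheelMinusSpoke n).edgeSet) : ∃ i j : Fin (n + 1), wheelArc n i j ∧ e = s(i, j) := by
  induction e using Sym2.ind with | h i j => ?_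
  rw [mem_edgeSet, wheelMinusSpoke_eq_fromRel, fromRel_adj] at he
  obtain ⟨-, h | h⟩ := he
  · exact ⟨i, j, h, rfl⟩
  · exact ⟨j, i, h, Sym2.eq_swap⟩

lemma mem_edgeSet_of_wheelArc {n : ℕ} (hn : n ≠ 1) {i j : Fin (n + 1)} (h : wheelArc n i j) :
    s(i, j) ∈ (wheelMinusSpoke n).edgeSet := by
  rw [mem_edgeSet, wheelMinusSpoke_eq_fromRel, fromRel_adj]
  refine ⟨fun hij => ?_, Or.inl h⟩
  subst hij
  unfold wheelArc at h
  omega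

section Labeling

variable (s : ℕ)

-- `x₂, x₄, …, x_{4s}` get the labels `1, …, 2s` and `x₃, x₅, …, x_{4s-1}` get `2s + 1, …, 4s - 1`.
def wheelLabel (i : ℕ) : ℕ :=
  if i = 0 then 6 * s + 1
  else if i = 1 then 5 * s
  else if i % 2 = 0 then (if i ≤ 2 * s then s + 1 - i / 2 else 3 * s + 1 - i / 2)
  else (if i ≤ 2 * s + 1 then (6 * s + 3 - i) / 2 else (10 * s + 1 - i) / 2)

def isolatedLabel (t : ℕ) : ℕ :=
  if t < s then 4 * s + t else 4 * s + 1 + t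

def wheelUnionLabel : Fin (4 * s + 1) ⊕ Fin (2 * s) → ℕ :=
  Sum.elim (fun i => wheelLabel s i) (fun t => isolatedLabel s t)

def rimIndex (v : ℕ) : ℕ :=
  if v ≤ s then 2 * (s + 1 - v) else if v ≤ 2 * s then 2 * (3 * s + 1 - v)
  else if v ≤ 3 * s then 6 * s + 3 - 2 * v else 10 * s + 1 - 2 * v

def rimEdgeSum (i : ℕ) : ℕ :=
  if i = 1 then 6 * s else if i ≤ 2 * s then 4 * s + 2 - i
  else if i = 2 * s + 1 then 4 * s + 1 else 8 * s + 1 - i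

def rimEdgeIndex (t : ℕ) : ℕ :=
  if t = 6 * s then 1 else if 4 * s + 2 ≤ t then 8 * s + 1 - t
  else if t = 4 * s + 1 then 2 * s + 1 else 4 * s + 2 - t

def wheelArcOfSum (t : ℕ) : ℕ × ℕ :=
  if t ≤ 6 * s then (rimEdgeIndex s t, rimEdgeIndex s t + 1)
  else if t = 6 * s + 1 then (4 * s, 1)
  else (0, rimIndex s (t - (6 * s + 1)))

variable {s}

lemma wheelLabel_zero : wheelLabel s 0 = 6 * s + 1 := rfl

lemma wheelLabel_mem {i : ℕ} (h : i ≤ 4 * s) : 1 ≤ wheelLabel s i ∧ wheelLabel s i ≤ 6 * s + 1 := by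
  unfold wheelLabel; split_ifs <;> omega

lemma eq_of_wheelLabel_eq {i j : ℕ} (hi : i ≤ 4 * s) (hj : j ≤ 4 * s)
    (h : wheelLabel s i = wheelLabel s j) : i = j := by
  unfold wheelLabel at h; split_ifs at h <;> first | contradiction | omega

lemma isolatedLabel_injective : Function.Injective (isolatedLabel s) := by
  intro t u h
  unfold isolatedLabel at h; split_ifs at h <;> omega

lemma isolatedLabel_mem {t : ℕ} (h : t < 2 * s) :
    4 * s ≤ isolatedLabel s t ∧ isolatedLabel s t ≤ 6 * s := by
  unfold isolatedLabel; split_ifs <;> omega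

lemma wheelLabel_ne_isolatedLabel {i t : ℕ} (hi : i ≤ 4 * s) (ht : t < 2 * s) :
    wheelLabel s i ≠ isolatedLabel s t := by
  unfold wheelLabel isolatedLabel; split_ifs <;> first | contradiction | omega

lemma wheelLabel_rim_mem {i : ℕ} (h₁ : 2 ≤ i) (h₂ : i ≤ 4 * s) :
    1 ≤ wheelLabel s i ∧ wheelLabel s i ≤ 4 * s - 1 := by
  unfold wheelLabel; split_ifs <;> first | contradiction | omega

lemma rimIndex_wheelLabel {i : ℕ} (h₁ : 2 ≤ i) (h₂ : i ≤ 4 * s) :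
    rimIndex s (wheelLabel s i) = i := by
  unfold wheelLabel rimIndex; split_ifs <;> first | contradiction | omega

lemma wheelLabel_rimIndex {v : ℕ} (h₁ : 1 ≤ v) (h₂ : v ≤ 4 * s - 1) :
    2 ≤ rimIndex s v ∧ rimIndex s v ≤ 4 * s ∧ wheelLabel s (rimIndex s v) = v := by
  unfold wheelLabel rimIndex; split_ifs <;> first | contradiction | omega

lemma wheelLabel_add_succ {i : ℕ} (h₁ : 1 ≤ i) (h₂ : i + 1 ≤ 4 * s) :
    wheelLabel s i + wheelLabel s (i + 1) = rimEdgeSum s i := by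
  unfold wheelLabel rimEdgeSum; split_ifs <;> first | contradiction | omega

lemma rimEdgeSum_mem {i : ℕ} (h₁ : 1 ≤ i) (h₂ : i + 1 ≤ 4 * s) :
    2 * s + 2 ≤ rimEdgeSum s i ∧ rimEdgeSum s i ≤ 6 * s := by
  unfold rimEdgeSum; split_ifs <;> omega

lemma rimEdgeIndex_rimEdgeSum {i : ℕ} (h₁ : 1 ≤ i) (h₂ : i + 1 ≤ 4 * s) :
    rimEdgeIndex s (rimEdgeSum s i) = i := by
  unfold rimEdgeSum rimEdgeIndex; split_ifs <;> omega

lemma rimEdgeSum_rimEdgeIndex {t : ℕ} (h₁ : 2 * s + 2 ≤ t) (h₂ : t ≤ 6 * s) :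
    1 ≤ rimEdgeIndex s t ∧ rimEdgeIndex s t + 1 ≤ 4 * s ∧ rimEdgeSum s (rimEdgeIndex s t) = t := by
  unfold rimEdgeSum rimEdgeIndex; split_ifs <;> omega

lemma wheelLabel_wrap (hs : 1 ≤ s) : wheelLabel s (4 * s) + wheelLabel s 1 = 6 * s + 1 := by
  unfold wheelLabel; split_ifs <;> first | contradiction | omega

lemma wheelLabel_add_mem_of_wheelArc {i j : ℕ} (h : wheelArc (4 * s) i j) (hi : i ≤ 4 * s)
    (hj : j ≤ 4 * s) :
    2 * s + 2 ≤ wheelLabel s i + wheelLabel s j ∧ wheelLabel s i + wheelLabel s j ≤ 10 * s := by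
  rcases h with ⟨rfl, hj₂⟩ | ⟨rfl, hi₁⟩ | ⟨rfl, rfl⟩
  · have := wheelLabel_rim_mem hj₂ hj
    rw [wheelLabel_zero]
    omega
  · rw [wheelLabel_add_succ hi₁ hj]
    have := rimEdgeSum_mem hi₁ hj
    omega
  · rw [wheelLabel_wrap (by omega)]
    omega

lemma wheelArcOfSum_wheelLabel_add {i j : ℕ} (h : wheelArc (4 * s) i j) (hi : i ≤ 4 * s)
    (hj : j ≤ 4 * s) : wheelArcOfSum s (wheelLabel s i + wheelLabel s j) = (i, j) := by
  rcases h with ⟨rfl, hj₂⟩ | ⟨rfl, hi₁⟩ | ⟨rfl, rfl⟩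
  · have := wheelLabel_rim_mem hj₂ hj
    rw [wheelArcOfSum, wheelLabel_zero, if_neg (by omega), if_neg (by omega),
      Nat.add_sub_cancel_left, rimIndex_wheelLabel hj₂ hj]
  · have := rimEdgeSum_mem hi₁ hj
    rw [wheelArcOfSum, wheelLabel_add_succ hi₁ hj, if_pos this.2, rimEdgeIndex_rimEdgeSum hi₁ hj]
  · rw [wheelArcOfSum, wheelLabel_wrap (by omega), if_neg (by omega), if_pos rfl]

lemma wheelArc_wheelArcOfSum {t : ℕ} (h₁ : 2 * s + 2 ≤ t) (h₂ : t ≤ 10 * s) :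
    wheelArc (4 * s) (wheelArcOfSum s t).1 (wheelArcOfSum s t).2 ∧
      (wheelArcOfSum s t).1 ≤ 4 * s ∧ (wheelArcOfSum s t).2 ≤ 4 * s ∧
      wheelLabel s (wheelArcOfSum s t).1 + wheelLabel s (wheelArcOfSum s t).2 = t := by
  unfold wheelArcOfSum
  split_ifs with hrim hwrap
  · obtain ⟨hi₁, hi₂, hsum⟩ := rimEdgeSum_rimEdgeIndex h₁ hrim
    refine ⟨Or.inr (Or.inl ⟨rfl, hi₁⟩), by omega, hi₂, ?_⟩
    rw [wheelLabel_add_succ hi₁ hi₂, hsum]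
  · exact ⟨Or.inr (Or.inr ⟨rfl, rfl⟩), le_rfl, by omega, by rw [wheelLabel_wrap (by omega), hwrap]⟩
  · obtain ⟨hj₁, hj₂, hv⟩ := wheelLabel_rimIndex (s := s) (v := t - (6 * s + 1)) (by omega) (by omega)
    refine ⟨Or.inl ⟨rfl, hj₁⟩, Nat.zero_le _, hj₂, ?_⟩
    rw [wheelLabel_zero, hv]
    omega

lemma wheelUnionLabel_injective : Function.Injective (wheelUnionLabel s) :=
  Function.Injective.sumElim (fun _ _ h => Fin.ext (eq_of_wheelLabel_eq (by omega) (by omega) h))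
    (fun _ _ h => Fin.ext (isolatedLabel_injective h))
    (fun _ t => wheelLabel_ne_isolatedLabel (by omega) t.2)

lemma range_wheelUnionLabel :
    Set.range (wheelUnionLabel s) = Set.Icc 1 (Fintype.card (Fin (4 * s + 1) ⊕ Fin (2 * s))) := by
  refine range_eq_Icc_of_injective wheelUnionLabel_injective ?_
  have hcard : Fintype.card (Fin (4 * s + 1) ⊕ Fin (2 * s)) = 6 * s + 1 := by
    rw [Fintype.card_sum, Fintype.card_fin, Fintype.card_fin]
    omega
  rintro (i | t) <;> rw [hcard, Set.mem_Icc]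
  · exact wheelLabel_mem (by omega)
  · have := t.2
    have := isolatedLabel_mem (s := s) t.2
    simp only [wheelUnionLabel, Sum.elim_inr]
    omega

lemma injOn_endpointSum_wheelLabel :
    Set.InjOn (endpointSum fun i : Fin (4 * s + 1) => wheelLabel s i)
      (wheelMinusSpoke (4 * s)).edgeSet := by
  intro e he e' he' h
  obtain ⟨i, j, hij, rfl⟩ := exists_wheelArc_of_mem_edgeSet he
  obtain ⟨i', j', hij', rfl⟩ := exists_wheelArc_of_mem_edgeSet he'
  have := congrArg (wheelArcOfSum s) h
  simp only [endpointSum_mk] at this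
  rw [wheelArcOfSum_wheelLabel_add hij (by omega) (by omega),
    wheelArcOfSum_wheelLabel_add hij' (by omega) (by omega), Prod.mk.injEq] at this
  rw [Fin.ext this.1, Fin.ext this.2]

lemma image_endpointSum_wheelLabel :
    (endpointSum fun i : Fin (4 * s + 1) => wheelLabel s i) '' (wheelMinusSpoke (4 * s)).edgeSet =
      Set.Icc (2 * s + 2) (10 * s) := by
  ext t
  constructor
  · rintro ⟨e, he, rfl⟩
    obtain ⟨i, j, hij, rfl⟩ := exists_wheelArc_of_mem_edgeSet he
    exact wheelLabel_add_mem_of_wheelArc hij (by omega) (by omega)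
  · rintro ⟨h₁, h₂⟩
    obtain ⟨harc, hi, hj, hsum⟩ := wheelArc_wheelArcOfSum h₁ h₂
    exact ⟨s(⟨_, Nat.lt_succ_of_le hi⟩, ⟨_, Nat.lt_succ_of_le hj⟩),
      mem_edgeSet_of_wheelArc (by omega) harc, hsum⟩

end Labeling

theorem isSEM_unionIsolated_wheelMinusSpoke (s : ℕ) :
    IsSEM (unionIsolated (wheelMinusSpoke (4 * s)) (2 * s)) :=
  isSEM_unionIsolated_of_endpointSum wheelUnionLabel_injective range_wheelUnionLabel
    injOn_endpointSum_wheelLabel image_endpointSum_wheelLabel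

theorem stmt6_general (n : ℕ) (hmod : n % 4 = 0) :
    semDeficiency (wheelMinusSpoke n) ≤ ((n / 2 : ℕ) : ℕ∞) := by
  obtain ⟨s, rfl⟩ : ∃ s, n = 4 * s := ⟨n / 4, by omega⟩
  rw [show 4 * s / 2 = 2 * s by omega]
  exact semDeficiency_le (isSEM_unionIsolated_wheelMinusSpoke s)

/-- for every `n ≥ 8` with `n ≡ 0 (mod 4)`,
`μₛ(W_n − e) ≤ n/2` for the wheel minus a spoke. -/
theorem stmt6 (n : ℕ) (hn : 8 ≤ n) (hmod : n % 4 = 0) :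
    semDeficiency (wheelMinusSpoke n) ≤ ((n / 2 : ℕ) : ℕ∞) :=
  stmt6_general n hmod
end

section
/- For integers n ≥ 1 and m ≥ 3, the join P_n + K̄_m (path joined with m isolated vertices) is super edge-magic if and only if n ∈ {1, 2}. -/
/-!
Necessity is the edge bound `q ≤ 2p - 3` of Enomoto et al.: in a super edge-magic labeling
with constant `k` the edge sums `f x + f y = k - f(xy)` are pairwise distinct and lie in
`[3, 2p - 1]`. For `P_n + K̄_m` we have `p = n + m` and `q = nm + n - 1`, which violates the
bound as soon as `n, m ≥ 3`.

Sufficiency rests on the converse criterion of Figueroa-Centeno et al.: a bijective vertex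
labeling by `1, …, p` whose `q` edge sums are distinct and lie in `s, …, s + q - 1` extends to a
super edge-magic labeling via `f(xy) = p + q + s - f x - f y`. For `n ≤ 2` the labeling
`u_0 ↦ 1`, `u_1 ↦ m + 2`, `v_j ↦ j + 2` has edge sums exactly `3, …, n(m + 1) + 1`.
-/

open SimpleGraph

open SimpleGraph

section EdgeLabelSum

variable {V : Type*}

def edgeLabelSum (f : V → ℕ) : Sym2 V → ℕ :=
  Sym2.lift ⟨fun x y => f x + f y, fun x y => add_comm (f x) (f y)⟩

@[simp]
lemma edgeLabelSum_mk (f : V → ℕ) (x y : V) : edgeLabelSum f s(x, y) = f x + f y := rfl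

variable [Fintype V] {G : SimpleGraph V}

theorem IsSEM.ncard_edgeSet_le (hG : IsSEM G) :
    G.edgeSet.ncard ≤ 2 * Fintype.card V - 3 := by
  obtain ⟨k, f, g, hinj, -, hf, hmagic⟩ := hG
  have hfinj : Function.Injective f := hinj.comp Sum.inl_injective
  have hginj : Function.Injective g := hinj.comp Sum.inr_injective
  have hsum : ∀ e : G.edgeSet, edgeLabelSum f e + g e = k := by
    rintro ⟨e, he⟩
    induction e using Sym2.ind with
    | _ x y => rw [← hmagic x y he, edgeLabelSum_mk]; ring
  have hmapsTo :
      Set.MapsTo (edgeLabelSum f) G.edgeSet (Set.Icc 3 (2 * Fintype.card V - 1)) := by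
    intro e he
    induction e using Sym2.ind with
    | _ x y =>
      have hx : f x ∈ Set.Icc 1 (Fintype.card V) := hf ▸ Set.mem_range_self x
      have hy : f y ∈ Set.Icc 1 (Fintype.card V) := hf ▸ Set.mem_range_self y
      have hxy : f x ≠ f y := fun h => (G.mem_edgeSet.mp he).ne (hfinj h)
      simp only [Set.mem_Icc, edgeLabelSum_mk] at hx hy ⊢
      omega
  have hinjOn : Set.InjOn (edgeLabelSum f) G.edgeSet := by
    intro e he e' he' h
    have h₁ : edgeLabelSum f e + g ⟨e, he⟩ = k := hsum ⟨e, he⟩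
    have h₂ : edgeLabelSum f e' + g ⟨e', he'⟩ = k := hsum ⟨e', he'⟩
    exact congrArg Subtype.val (hginj (show g ⟨e, he⟩ = g ⟨e', he'⟩ by omega))
  calc G.edgeSet.ncard ≤ (Set.Icc 3 (2 * Fintype.card V - 1)).ncard :=
        Set.ncard_le_ncard_of_injOn _ hmapsTo hinjOn
    _ = 2 * Fintype.card V - 3 := by rw [Set.ncard_Icc_nat]; omega

theorem isSEM_of_injOn_edgeLabelSum (f : V → ℕ) (s : ℕ) (hf : Function.Injective f)
    (hf_mem : ∀ x, f x ∈ Set.Icc 1 (Fintype.card V))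
    (hinjOn : Set.InjOn (edgeLabelSum f) G.edgeSet)
    (hmapsTo : Set.MapsTo (edgeLabelSum f) G.edgeSet (Set.Ico s (s + G.edgeSet.ncard))) :
    IsSEM G := by
  set p := Fintype.card V
  set q := G.edgeSet.ncard
  have hrange : Set.range f = Set.Icc 1 p :=
    Set.eq_of_subset_of_ncard_le (Set.range_subset_iff.2 hf_mem) (by
      rw [Set.ncard_range_of_injective hf, Set.ncard_Icc_nat, Nat.card_eq_fintype_card]; omega)
  have himage : edgeLabelSum f '' G.edgeSet = Set.Ico s (s + q) :=
    Set.eq_of_subset_of_ncard_le hmapsTo.image_subset (by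
      rw [hinjOn.ncard_image, Set.ncard_Ico_nat]; omega)
  have hsum_mem (e : G.edgeSet) : edgeLabelSum f e ∈ Set.Ico s (s + q) := hmapsTo e.2
  set g : G.edgeSet → ℕ := fun e => p + q + s - edgeLabelSum f e with hg
  have hg_range : Set.range g = Set.Ioc p (p + q) := by
    ext v
    constructor
    · rintro ⟨e, rfl⟩
      have := hsum_mem e
      simp only [Set.mem_Ico, Set.mem_Ioc, hg] at this ⊢
      omega
    · intro hv
      obtain ⟨e, he, hev⟩ : p + q + s - v ∈ edgeLabelSum f '' G.edgeSet := by
        rw [himage]; simp only [Set.mem_Ico, Set.mem_Ioc] at hv ⊢; omega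
      refine ⟨⟨e, he⟩, ?_⟩
      simp only [Set.mem_Ioc, hg] at hv ⊢
      omega
  refine ⟨p + q + s, f, g, ?_, ?_, hrange, ?_⟩
  · refine hf.sumElim (fun e e' h => Subtype.ext (hinjOn e.2 e'.2 ?_)) (fun x e h => ?_)
    · have := hsum_mem e
      have := hsum_mem e'
      simp only [Set.mem_Ico, hg] at *
      omega
    · have := hf_mem x
      have : g e ∈ Set.Ioc p (p + q) := hg_range ▸ Set.mem_range_self e
      simp only [Set.mem_Icc, Set.mem_Ioc] at *
      omega
  · rw [Set.Sum.elim_range, hrange, hg_range]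
    ext v
    simp only [Set.mem_union, Set.mem_Icc, Set.mem_Ioc]
    omega
  · intro x y h
    have := hsum_mem ⟨_, G.mem_edgeSet.mpr h⟩
    simp only [Set.mem_Ico, hg, edgeLabelSum_mk] at *
    omega

end EdgeLabelSum

section PathJoin

variable {n m : ℕ}

lemma pathJoin_adj_inl_inr (i : Fin n) (j : Fin m) :
    (pathJoin n m).Adj (.inl i) (.inr j) := by
  simp [pathJoin]

lemma pathJoin_adj_inl_inl {i j : Fin n} (h : (j : ℕ) = i + 1) :
    (pathJoin n m).Adj (.inl i) (.inl j) := by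
  simp only [pathJoin, fromRel_adj, ne_eq, Sum.inl.injEq]
  exact ⟨fun hij => by simp [hij] at h, .inl (.inl ⟨i, j, rfl, rfl, h⟩)⟩

lemma pathJoin_edge_cases {e : Sym2 (Fin n ⊕ Fin m)} (he : e ∈ (pathJoin n m).edgeSet) :
    (∃ i j : Fin n, (j : ℕ) = i + 1 ∧ e = s(.inl i, .inl j)) ∨
      ∃ (i : Fin n) (j : Fin m), e = s(.inl i, .inr j) := by
  induction e using Sym2.ind with
  | _ a b =>
    simp only [mem_edgeSet, pathJoin, fromRel_adj] at he
    rcases he with ⟨-, (⟨i, j, rfl, rfl, h⟩ | ⟨i, j, rfl, rfl⟩) |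
      (⟨i, j, rfl, rfl, h⟩ | ⟨i, j, rfl, rfl⟩)⟩
    · exact .inl ⟨i, j, h, rfl⟩
    · exact .inr ⟨i, j, rfl⟩
    · exact .inl ⟨i, j, h, Sym2.eq_swap⟩
    · exact .inr ⟨i, j, Sym2.eq_swap⟩

lemma le_ncard_edgeSet_pathJoin : n * m + (n - 1) ≤ (pathJoin n m).edgeSet.ncard := by
  let φ : (Fin n × Fin m) ⊕ Fin (n - 1) → Sym2 (Fin n ⊕ Fin m) :=
    Sum.elim (fun ij => s(.inl ij.1, .inr ij.2))
      (fun k => s(.inl ⟨k, by omega⟩, .inl ⟨k + 1, by omega⟩))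
  have hφ : Function.Injective φ := by
    rintro (⟨i, j⟩ | k) (⟨i', j'⟩ | k') h <;> simp [φ, Fin.ext_iff] at h ⊢
    · exact h
    · omega
  have hmapsTo : ∀ x ∈ Set.univ, φ x ∈ (pathJoin n m).edgeSet := by
    rintro (⟨i, j⟩ | k) -
    · exact pathJoin_adj_inl_inr i j
    · exact pathJoin_adj_inl_inl rfl
  calc n * m + (n - 1) = (Set.univ : Set ((Fin n × Fin m) ⊕ Fin (n - 1))).ncard := by
        simp only [Set.ncard_univ, Nat.card_eq_fintype_card, Fintype.card_sum,
          Fintype.card_prod, Fintype.card_fin]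
    _ ≤ (pathJoin n m).edgeSet.ncard :=
        Set.ncard_le_ncard_of_injOn φ hmapsTo hφ.injOn

theorem isSEM_pathJoin_of_le_two (hn₁ : 1 ≤ n) (hn₂ : n ≤ 2) : IsSEM (pathJoin n m) := by
  let f : Fin n ⊕ Fin m → ℕ := Sum.elim (fun i => if (i : ℕ) = 0 then 1 else m + 2) (· + 2)
  refine isSEM_of_injOn_edgeLabelSum f 3 ?_ ?_ ?_ ?_
  · rintro (i | j) (i' | j') h <;> simp only [f, Sum.elim_inl, Sum.elim_inr] at h <;>
      (try split_ifs at h) <;>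
      simp only [Sum.inl.injEq, Sum.inr.injEq, reduceCtorEq, Fin.ext_iff] <;> omega
  · rintro (i | j) <;> simp only [f, Sum.elim_inl, Sum.elim_inr, Fintype.card_sum,
      Fintype.card_fin, Set.mem_Icc] <;> (try split_ifs) <;> omega
  · rintro e he e' he' h
    rcases pathJoin_edge_cases he with ⟨i, j, hij, rfl⟩ | ⟨i, j, rfl⟩ <;>
      rcases pathJoin_edge_cases he' with ⟨i', j', hij', rfl⟩ | ⟨i', j', rfl⟩ <;>
      simp only [edgeLabelSum_mk, f, Sum.elim_inl, Sum.elim_inr] at h <;>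
      split_ifs at h <;> simp [Fin.ext_iff] <;> omega
  · intro e he
    have hq := le_ncard_edgeSet_pathJoin (n := n) (m := m)
    obtain rfl | rfl : n = 1 ∨ n = 2 := by omega
    all_goals
      rcases pathJoin_edge_cases he with ⟨i, j, hij, rfl⟩ | ⟨i, j, rfl⟩ <;>
        simp only [edgeLabelSum_mk, f, Sum.elim_inl, Sum.elim_inr, Set.mem_Ico] <;>
        split_ifs <;> omega

end PathJoin

/-- for `n ≥ 1` and `m ≥ 3`, the join `P_n + K̄_m` is super edge-magic
iff `n ∈ {1, 2}`. -/
theorem stmt8 (n m : ℕ) (hn : 1 ≤ n) (hm : 3 ≤ m) :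
    IsSEM (pathJoin n m) ↔ n = 1 ∨ n = 2 := by
  constructor
  · intro hsem
    have hub := hsem.ncard_edgeSet_le
    have hlb : n * m + (n - 1) ≤ _ := le_ncard_edgeSet_pathJoin
    rw [Fintype.card_sum, Fintype.card_fin, Fintype.card_fin] at hub
    by_contra hn12
    have hn3 : 3 ≤ n := by omega
    have : 3 * n + 3 * m ≤ n * m + 9 := by nlinarith
    omega
  · rintro (rfl | rfl) <;> exact isSEM_pathJoin_of_le_two (by norm_num) (by norm_num)
end
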